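/- Let H/K be a finite extension of fields, n = [H:K], and let σ be a field automorphism of H fixing K pointwise, of exact order e. Let c ∈ H, c ≠ 0, and suppose that N := c·σ(c)·σ^2(c)···σ^{e−1}(c) lies in K. Then e divides n, and the characteristic polynomial over K of the K-linear endomorphism of H given by x ↦ c·σ(x) equals (X^e − N)^{n/e}. -/

import Mathlib

/-!
Let `F` be the fixed field of `σ`, so that `[H : F] = e`. The map `τ x = c σ(x)` is `F`-linear,
satisfies `τ ^ e = N`, and by Dedekind's independence of characters its powers
`1, τ, …, τ ^ (e - 1)` are `F`-linearly independent. Hence some `x` has `x, τ x, …, τ ^ (e - 1) x`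
as an `F`-basis of `H`; in it `τ` acts as multiplication by the root on `K[X] ⧸ (X ^ e - N)`, a
matrix with entries in `K`. Combined with a `K`-basis of `F`, this makes the `K`-matrix of `τ`
block diagonal with `[F : K] = n / e` copies of a matrix whose characteristic polynomial is
`X ^ e - N`.
-/

open Polynomial Module IntermediateField

theorem Matrix.charpoly_blockDiagonal {R n o : Type*} [CommRing R] [Fintype n] [DecidableEq n]
    [Fintype o] [DecidableEq o] (M : o → Matrix n n R) :
    (blockDiagonal M).charpoly = ∏ k, (M k).charpoly := by
  have : (blockDiagonal M).charmatrix = blockDiagonal fun k => (M k).charmatrix := by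
    ext ⟨i, k⟩ ⟨j, k'⟩
    by_cases hk : k = k' <;> by_cases hij : i = j <;> simp [blockDiagonal_apply, hk, hij]
  rw [charpoly, this, det_blockDiagonal]
  rfl

namespace Module.End

variable {F V : Type*} [Field F] [AddCommGroup V] [Module F V] [FiniteDimensional F V]

theorem exists_forall_aeval_apply_eq_zero_imp_aeval_eq_zero (f : Module.End F V) :
    ∃ x : V, ∀ p : F[X], aeval f p x = 0 → aeval f p = 0 := by
  obtain ⟨x, hx⟩ := exists_ker_toSpanSingleton_eq_annihilator F[X] (AEval' f)
  obtain ⟨x, rfl⟩ := (AEval'.of f).surjective x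
  refine ⟨x, fun p hp => LinearMap.ext fun y => ?_⟩
  have hp : p ∈ annihilator F[X] (AEval' f) := by
    rw [← hx, LinearMap.mem_ker, LinearMap.toSpanSingleton_apply, ← AEval.of_aeval_smul]
    simpa using hp
  simpa [← AEval.of_aeval_smul] using Module.mem_annihilator.mp hp (AEval'.of f y)

theorem exists_linearIndependent_pow_apply (f : Module.End F V) {ι : Type*} {k : ι → ℕ}
    (hk : LinearIndependent F fun i => f ^ k i) :
    ∃ x : V, LinearIndependent F fun i => (f ^ k i) x := by
  obtain ⟨x, hx⟩ := f.exists_forall_aeval_apply_eq_zero_imp_aeval_eq_zero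
  refine ⟨x, hk.map (f := LinearMap.applyₗ x) (Submodule.disjoint_def.mpr fun g hg hgx => ?_)⟩
  have hspan : Submodule.span F (Set.range fun i => f ^ k i) ≤
      Subalgebra.toSubmodule (Algebra.adjoin F {f}) :=
    Submodule.span_le.mpr <| Set.range_subset_iff.mpr fun i =>
      Subalgebra.pow_mem _ (Algebra.self_mem_adjoin_singleton F f) _
  obtain ⟨p, rfl⟩ : g ∈ (aeval f).range := Algebra.adjoin_singleton_eq_range_aeval F f ▸ hspan hg
  exact hx p hgx

end Module.End

section ScalarTower

variable {K F V : Type*} [Field K] [Field F] [Algebra K F] [AddCommGroup V] [Module F V]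
  [Module K V] [IsScalarTower K F V]

theorem LinearMap.toMatrix_restrictScalars_eq_blockDiagonal {ι κ : Type*} [Fintype ι]
    [DecidableEq ι] [Fintype κ] [DecidableEq κ] (bF : Basis κ K F) (bV : Basis ι F V)
    {f : Module.End F V} {A : Matrix ι ι K} (hA : toMatrix bV bV f = A.map (algebraMap K F)) :
    toMatrix (bF.smulTower' bV) (bF.smulTower' bV) (f.restrictScalars K) =
      Matrix.blockDiagonal fun _ => A := by
  rw [restrictScalars_toMatrix, hA]
  ext ⟨i, k⟩ ⟨j, k'⟩
  simp [Matrix.blockDiagonal_apply, Algebra.algebraMap_eq_smul_one, Matrix.one_apply]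

theorem LinearMap.charpoly_restrictScalars_of_toMatrix_eq_map [FiniteDimensional K F]
    [FiniteDimensional K V] {ι : Type*} [Fintype ι] [DecidableEq ι] (bV : Basis ι F V)
    {f : Module.End F V} {A : Matrix ι ι K} (hA : toMatrix bV bV f = A.map (algebraMap K F)) :
    (f.restrictScalars K).charpoly = A.charpoly ^ finrank K F := by
  let bF := Module.finBasis K F
  rw [← charpoly_toMatrix _ (bF.smulTower' bV), toMatrix_restrictScalars_eq_blockDiagonal bF bV hA,
    Matrix.charpoly_blockDiagonal, Finset.prod_const, Finset.card_univ, Fintype.card_fin]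

variable {A : Type*} [Ring A] [Algebra K A]

theorem aeval_apply_eq_sum_repr_aeval_gen (pb : PowerBasis K A) {f : Module.End F V}
    (hf : aeval f (minpoly K pb.gen) = 0) (x : V) (p : K[X]) :
    aeval f p x = ∑ i, pb.basis.repr (aeval pb.gen p) i • (f ^ (i : ℕ)) x := by
  set c := pb.basis.repr (aeval pb.gen p)
  set q : K[X] := ∑ i, C (c i) * X ^ (i : ℕ)
  have hq : aeval pb.gen (p - q) = 0 := by
    conv_lhs => rw [map_sub, ← pb.basis.sum_repr (aeval pb.gen p)]
    simp [q, c, Algebra.smul_def]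
  obtain ⟨r, hr⟩ := minpoly.dvd K pb.gen hq
  rw [← sub_add_cancel p q, hr]
  simp [q, hf]

theorem LinearMap.toMatrix_eq_map_leftMulMatrix_gen (pb : PowerBasis K A) {f : Module.End F V}
    (hf : aeval f (minpoly K pb.gen) = 0) (x : V) (b : Basis (Fin pb.dim) F V)
    (hb : ∀ i, b i = (f ^ (i : ℕ)) x) :
    toMatrix b b f = (Algebra.leftMulMatrix pb.basis pb.gen).map (algebraMap K F) := by
  ext i j
  have hfb : f (b j) = aeval f (X ^ ((j : ℕ) + 1) : K[X]) x := by
    rw [hb, aeval_X_pow, pow_succ', Module.End.mul_apply]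
  rw [Matrix.map_apply, Algebra.leftMulMatrix_apply, toMatrix_apply, toMatrix_apply, hfb,
    aeval_apply_eq_sum_repr_aeval_gen pb hf]
  simp only [← hb, ← algebraMap_smul F (_ : K) (b _), b.repr_sum_self]
  simp [pow_succ']

theorem LinearMap.charpoly_restrictScalars_eq_pow [FiniteDimensional K F] [FiniteDimensional K V]
    {g : K[X]} (hg : g.Monic) {f : Module.End F V} (hf : aeval f g = 0) {x : V}
    (hx : LinearIndependent F fun i : Fin g.natDegree => (f ^ (i : ℕ)) x)
    (hdim : finrank F V = g.natDegree) :
    (f.restrictScalars K).charpoly = g ^ finrank K F := by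
  have : FiniteDimensional F V := .right K F V
  let pb := AdjoinRoot.powerBasis' hg
  have hmin : minpoly K pb.gen = g := by
    rw [AdjoinRoot.powerBasis'_gen, AdjoinRoot.minpoly_root hg.ne_zero, hg.leadingCoeff, inv_one,
      map_one, mul_one]
  let b : Basis (Fin pb.dim) F V :=
    basisOfLinearIndependentOfCardEqFinrank' (fun i => (f ^ (i : ℕ)) x) hx
      (by rw [Fintype.card_fin, hdim]; rfl)
  have hb (i : Fin pb.dim) : b i = (f ^ (i : ℕ)) x :=
    congrFun (coe_basisOfLinearIndependentOfCardEqFinrank' (K := F) _ hx _) i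
  rw [charpoly_restrictScalars_of_toMatrix_eq_map b
    (toMatrix_eq_map_leftMulMatrix_gen pb (by rwa [hmin]) x b hb), charpoly_leftMulMatrix, hmin]

end ScalarTower

namespace AlgEquiv

variable {K H : Type*} [Field K] [Field H] [Algebra K H]

def twistedEnd (σ : H ≃ₐ[K] H) (c : H) : Module.End (fixedField (Subgroup.zpowers σ)) H where
  toFun x := c * σ x
  map_add' x y := by rw [map_add, mul_add]
  map_smul' a x := by
    have ha : σ a = a := a.2 ⟨σ, Subgroup.mem_zpowers σ⟩
    rw [RingHom.id_apply, Algebra.smul_def, Algebra.smul_def, map_mul,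
      IntermediateField.algebraMap_apply, ha, mul_left_comm]

variable (σ : H ≃ₐ[K] H) (c : H)

@[simp]
theorem twistedEnd_apply (x : H) : twistedEnd σ c x = c * σ x := rfl

theorem twistedEnd_pow_apply (i : ℕ) (x : H) :
    (twistedEnd σ c ^ i) x = (∏ j ∈ Finset.range i, (σ ^ j) c) * (σ ^ i) x := by
  induction i with
  | zero => simp
  | succ i ih =>
    rw [pow_succ', Module.End.mul_apply, ih, twistedEnd_apply, map_mul, map_prod,
      Finset.prod_range_succ', pow_zero, one_apply, pow_succ', mul_apply]
    simp only [← mul_apply, ← pow_succ']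
    ring

theorem aeval_twistedEnd_X_pow_orderOf_sub_C {N : K}
    (hN : algebraMap K H N = ∏ i ∈ Finset.range (orderOf σ), (σ ^ i) c) :
    aeval (twistedEnd σ c) (X ^ orderOf σ - C N) = 0 := by
  ext x
  rw [map_sub, aeval_X_pow, aeval_C, LinearMap.sub_apply, twistedEnd_pow_apply,
    pow_orderOf_eq_one, ← hN, Module.algebraMap_end_apply, Algebra.smul_def]
  simp

theorem linearIndependent_twistedEnd_pow (hc : c ≠ 0) :
    LinearIndependent (fixedField (Subgroup.zpowers σ))
      fun i : Fin (orderOf σ) => twistedEnd σ c ^ (i : ℕ) := by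
  have hσ : LinearIndependent H
      fun i : Fin (orderOf σ) => ((σ ^ (i : ℕ) : H ≃ₐ[K] H) : H →ₐ[K] H).toLinearMap :=
    (linearIndependent_algHom_toLinearMap K H H).comp _ fun i j hij => Fin.ext <|
      pow_injOn_Iio_orderOf i.2 j.2 (AlgEquiv.coe_toAlgHom_injective hij)
  have hu (i : ℕ) : ∏ j ∈ Finset.range i, (σ ^ j) c ≠ 0 :=
    Finset.prod_ne_zero_iff.mpr fun j _ => (_root_.map_ne_zero _).mpr hc
  refine LinearIndependent.of_comp (LinearMap.restrictScalarsₗ K _ H H _) ?_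
  convert (hσ.units_smul fun i => Units.mk0 _ (hu i)).restrict_scalars'
    (fixedField (Subgroup.zpowers σ)) with i
  · ext x
    simp [twistedEnd_pow_apply]
  -- the two `Module F (H →ₗ[K] H)` instances that arise agree definitionally
  · rfl

theorem finrank_fixedField_zpowers [FiniteDimensional K H] :
    finrank (fixedField (Subgroup.zpowers σ)) H = orderOf σ := by
  rw [finrank_fixedField_eq_card, Nat.card_zpowers]

end AlgEquiv

theorem charpoly_mul_semilinear_eq_pow
    (K H : Type) [Field K] [Field H] [Algebra K H] [FiniteDimensional K H]
    (n : ℕ) (hn : n = Module.finrank K H)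
    (σ : H ≃ₐ[K] H) (e : ℕ) (he : orderOf σ = e)
    (c : H) (hc : c ≠ 0)
    (N : K) (hN : algebraMap K H N = ∏ i ∈ Finset.range e, (σ ^ i) c) :
    e ∣ n ∧
      LinearMap.charpoly ((LinearMap.mulLeft K c).comp (σ.toLinearMap : H →ₗ[K] H)) =
        (Polynomial.X ^ e - Polynomial.C N) ^ (n / e) := by
  subst hn he
  have htower : finrank K (fixedField (Subgroup.zpowers σ)) * orderOf σ = finrank K H := by
    rw [← σ.finrank_fixedField_zpowers, finrank_mul_finrank]
  obtain ⟨x, hx⟩ :=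
    (σ.twistedEnd c).exists_linearIndependent_pow_apply (σ.linearIndependent_twistedEnd_pow c hc)
  have hdeg : (X ^ orderOf σ - C N).natDegree = orderOf σ := natDegree_X_pow_sub_C
  refine ⟨Dvd.intro_left _ htower, ?_⟩
  have hτ : (LinearMap.mulLeft K c).comp (σ.toLinearMap : H →ₗ[K] H) =
      (σ.twistedEnd c).restrictScalars K := rfl
  rw [hτ, ← htower, Nat.mul_div_cancel _ (orderOf_pos σ)]
  exact LinearMap.charpoly_restrictScalars_eq_pow (monic_X_pow_sub_C N (orderOf_pos σ).ne')
    (σ.aeval_twistedEnd_X_pow_orderOf_sub_C c hN) (by rwa [hdeg])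
    (by rw [hdeg, σ.finrank_fixedField_zpowers])
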